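/- arXiv:2305.16614 — 8 statements merged into one kernel-verified Lean document; each statement's English description precedes it below -/
import Mathlib

section
/- Let n, m be positive integers, A an n×n real matrix, B an n×m real matrix, R an m×n real matrix, Q a symmetric n×n real matrix, and 0 < α < 1 a real number. Suppose the 2n×2n block matrix [[α•Q, Q·Aᵀ + Rᵀ·Bᵀ], [A·Q + B·R, Q]] is positive definite. Set F = R·Q⁻¹, P = Q⁻¹ and Ā = A + B·F. Then the matrix α•P − Āᵀ·P·Ā is positive definite. -/
open Matrix

open scoped Matrix in
/-- The `(2,2)` block of a positive definite block matrix is positive definite. -/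
theorem aux_fromBlocks_posDef₂₂ {m n : Type*} [Fintype m] [Fintype n]
    {A : Matrix m m ℝ} {B : Matrix m n ℝ} {C : Matrix n m ℝ} {D : Matrix n n ℝ}
    (h : (fromBlocks A B C D).PosDef) : D.PosDef := by
  refine PosDef.of_dotProduct_mulVec_pos (isHermitian_fromBlocks_iff.mp h.1).2.2.2 (fun x hx => ?_)
  have hy : (Sum.elim (0 : m → ℝ) x) ≠ 0 := by
    intro h0
    apply hx
    ext i
    exact congrFun h0 (Sum.inr i)
  have := h.dotProduct_mulVec_pos hy
  simpa [fromBlocks_mulVec, Function.star_sumElim] using this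

open scoped Matrix in
/-- Positive definite Schur complement from a positive definite block matrix. -/
theorem aux_schur_posDef₂₂ {m n : Type*} [Fintype m] [Fintype n] [DecidableEq n]
    {A : Matrix m m ℝ} (B : Matrix m n ℝ) {D : Matrix n n ℝ}
    (h : (fromBlocks A B Bᴴ D).PosDef) (hD : D.PosDef) :
    (A - B * D⁻¹ * Bᴴ).PosDef := by
  haveI := hD.isUnit.invertible
  refine PosDef.of_dotProduct_mulVec_pos ?_ (fun x hx => ?_)
  · exact ((PosDef.fromBlocks₂₂ A B hD).mp h.posSemidef).1
  · have hy : (x ⊕ᵥ (-((D⁻¹ * Bᴴ) *ᵥ x))) ≠ 0 := by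
      intro h0
      apply hx
      ext i
      exact congrFun h0 (Sum.inl i)
    have hpos := h.dotProduct_mulVec_pos hy
    have heq := schur_complement_eq₂₂ A B x (-((D⁻¹ * Bᴴ) *ᵥ x)) hD.1
    rw [add_neg_cancel] at heq
    simp only [star_zero, zero_vecMul, zero_dotProduct, zero_add] at heq
    rw [dotProduct_mulVec, ← heq, ← dotProduct_mulVec]
    exact hpos

/-- Congruence by an invertible matrix preserves positive definiteness. -/
theorem aux_congr_posDef {n : Type*} [Fintype n] [DecidableEq n]
    {S : Matrix n n ℝ} (hS : S.PosDef) (N : Matrix n n ℝ) [Invertible N] :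
    (Nᴴ * S * N).PosDef := by
  refine PosDef.of_dotProduct_mulVec_pos (isHermitian_conjTranspose_mul_mul N hS.1) (fun x hx => ?_)
  have hNx : N *ᵥ x ≠ 0 := fun h0 => hx (by
    have := N.mulVec_injective_of_invertible (by simpa using h0 : N *ᵥ x = N *ᵥ 0)
    simpa using this)
  have := hS.dotProduct_mulVec_pos hNx
  simpa [← mulVec_mulVec, dotProduct_mulVec, star_mulVec, Matrix.mul_assoc,
    vecMul_mulVec] using this

theorem stmt_0 {n m : ℕ} (hn : 0 < n) (hm : 0 < m)
    (A : Matrix (Fin n) (Fin n) ℝ) (B : Matrix (Fin n) (Fin m) ℝ)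
    (R : Matrix (Fin m) (Fin n) ℝ) (Q : Matrix (Fin n) (Fin n) ℝ)
    (hQsymm : Q.IsSymm) (α : ℝ) (hα0 : 0 < α) (hα1 : α < 1)
    (hblock : (Matrix.fromBlocks (α • Q) (Q * Aᵀ + Rᵀ * Bᵀ) (A * Q + B * R) Q).PosDef) :
    (α • Q⁻¹ - (A + B * (R * Q⁻¹))ᵀ * Q⁻¹ * (A + B * (R * Q⁻¹))).PosDef := by
  have hQ : Q.PosDef := aux_fromBlocks_posDef₂₂ hblock
  haveI := hQ.isUnit.invertible
  have hBH : (Q * Aᵀ + Rᵀ * Bᵀ)ᴴ = A * Q + B * R := by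
    simp [conjTranspose_add, conjTranspose_mul, hQsymm.eq,
      show Qᴴ = Q from hQ.1, Matrix.mul_assoc]
  have hblock' : (Matrix.fromBlocks (α • Q) (Q * Aᵀ + Rᵀ * Bᵀ)
      (Q * Aᵀ + Rᵀ * Bᵀ)ᴴ Q).PosDef := by rwa [hBH]
  have hS := aux_schur_posDef₂₂ _ hblock' hQ
  have := aux_congr_posDef hS Q⁻¹
  have hQinv : Q⁻¹ᴴ = Q⁻¹ := by
    rw [conjTranspose_nonsing_inv, show Qᴴ = Q from hQ.1]
  rw [hQinv] at this
  convert this using 1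
  have hQQ : Q⁻¹ * Q = 1 := inv_mul_of_invertible Q
  have hQQ' : Q * Q⁻¹ = 1 := mul_inv_of_invertible Q
  rw [hBH]
  have hQsy : Qᵀ = Q := hQsymm.eq
  have hQinvT : Q⁻¹ᵀ = Q⁻¹ := by rw [transpose_nonsing_inv, hQsy]
  have h1 : Q⁻¹ * (Q * Aᵀ + Rᵀ * Bᵀ) = (A + B * (R * Q⁻¹))ᵀ := by
    rw [transpose_add, transpose_mul, transpose_mul, hQinvT, Matrix.mul_add,
      ← Matrix.mul_assoc, hQQ, Matrix.one_mul, Matrix.mul_assoc]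
  have h2 : (A * Q + B * R) * Q⁻¹ = A + B * (R * Q⁻¹) := by
    rw [Matrix.add_mul, Matrix.mul_assoc, hQQ', Matrix.mul_one, Matrix.mul_assoc]
  rw [Matrix.mul_sub, Matrix.sub_mul]
  congr 1
  · rw [Matrix.mul_smul, Matrix.smul_mul, Matrix.mul_assoc, hQQ', Matrix.mul_one]
  · rw [← h1, ← h2]
    simp only [Matrix.mul_assoc]
end

section
/- Let P be a positive definite symmetric n×n real matrix and c ∈ ℝⁿ a nonzero vector. Then the real number √(cᵀ P⁻¹ c) is the greatest element of the set { cᵀ s : s ∈ ℝⁿ, sᵀ P s ≤ 1 }; that is, cᵀ s ≤ √(cᵀ P⁻¹ c) for every s with sᵀ P s ≤ 1, and this bound is attained by some s with sᵀ P s ≤ 1. -/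
open Matrix

theorem stmt_1 {n : ℕ} (P : Matrix (Fin n) (Fin n) ℝ) (hP : P.PosDef)
    (c : Fin n → ℝ) (hc : c ≠ 0) :
    IsGreatest {x : ℝ | ∃ s : Fin n → ℝ, s ⬝ᵥ P.mulVec s ≤ 1 ∧ x = c ⬝ᵥ s}
      (Real.sqrt (c ⬝ᵥ P⁻¹.mulVec c)) := by
  have hsymm : Pᵀ = P := hP.isHermitian
  have hPx : P *ᵥ (P⁻¹ *ᵥ c) = c := by
    rw [mulVec_mulVec, Matrix.mul_nonsing_inv _ (isUnit_iff_isUnit_det _ |>.1 hP.isUnit),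
      one_mulVec]
  set x : Fin n → ℝ := P⁻¹ *ᵥ c with hx
  set α : ℝ := c ⬝ᵥ P⁻¹ *ᵥ c with hadef
  have hcx : c ⬝ᵥ x = α := rfl
  have hαpos : 0 < α := by
    have := hP.inv.dotProduct_mulVec_pos hc
    simpa using this
  have hkey : ∀ y : Fin n → ℝ, x ⬝ᵥ P *ᵥ y = c ⬝ᵥ y := by
    intro y
    rw [dotProduct_mulVec, ← mulVec_transpose, hsymm, hPx]
  have hxx : x ⬝ᵥ P *ᵥ x = α := by rw [hkey x]
  have hs : Real.sqrt α * Real.sqrt α = α := Real.mul_self_sqrt hαpos.le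
  have hspos : 0 < Real.sqrt α := Real.sqrt_pos.2 hαpos
  -- Cauchy–Schwarz: ∀ s, (c ⬝ᵥ s)^2 ≤ α * (s ⬝ᵥ P *ᵥ s)
  have hCS : ∀ s : Fin n → ℝ, (c ⬝ᵥ s) ^ 2 ≤ α * (s ⬝ᵥ P *ᵥ s) := by
    intro s
    have hsx : s ⬝ᵥ P *ᵥ x = c ⬝ᵥ s := by rw [dotProduct_comm, hPx]
    have hxs : x ⬝ᵥ P *ᵥ s = c ⬝ᵥ s := hkey s
    have hquad : ∀ t : ℝ, 0 ≤ α * (t * t) + (-2 * (c ⬝ᵥ s)) * t + (s ⬝ᵥ P *ᵥ s) := by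
      intro t
      have h0 : 0 ≤ (s - t • x) ⬝ᵥ P *ᵥ (s - t • x) := by
        rcases eq_or_ne (s - t • x) 0 with h | h
        · rw [h]; simp
        · exact le_of_lt (by simpa using hP.dotProduct_mulVec_pos h)
      have hexp : (s - t • x) ⬝ᵥ P *ᵥ (s - t • x)
          = α * (t * t) + (-2 * (c ⬝ᵥ s)) * t + (s ⬝ᵥ P *ᵥ s) := by
        simp only [mulVec_sub, dotProduct_sub, sub_dotProduct, mulVec_smul,
          smul_dotProduct, dotProduct_smul, smul_eq_mul, hsx, hxs, hxx]
        ring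
      linarith [hexp ▸ h0]
    have := discrim_le_zero hquad
    rw [discrim] at this
    nlinarith [this]
  constructor
  · refine ⟨(Real.sqrt α)⁻¹ • x, ?_, ?_⟩
    · rw [mulVec_smul, smul_dotProduct, dotProduct_smul, hxx, smul_eq_mul, smul_eq_mul]
      apply le_of_eq
      field_simp
      rw [Real.sq_sqrt hαpos.le]
    · rw [dotProduct_smul, hcx, smul_eq_mul]
      field_simp
      rw [Real.sq_sqrt hαpos.le]
  · rintro y ⟨s, hs1, rfl⟩
    rcases le_or_gt (c ⬝ᵥ s) 0 with h | h
    · exact h.trans (Real.sqrt_nonneg _)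
    · have h2 : (c ⬝ᵥ s) ^ 2 ≤ α := by
        have := hCS s
        nlinarith [hP.dotProduct_mulVec_pos (x := s) (fun h0 => by simp [h0] at h), hs1]
      calc c ⬝ᵥ s = Real.sqrt ((c ⬝ᵥ s) ^ 2) := by rw [Real.sqrt_sq h.le]
        _ ≤ Real.sqrt α := Real.sqrt_le_sqrt h2
end

section
/- Let P be a positive definite symmetric n×n real matrix and c ∈ ℝⁿ a nonzero vector. Then (cᵀ s ≤ 1 for every s ∈ ℝⁿ with sᵀ P s ≤ 1) if and only if cᵀ P⁻¹ c ≤ 1. -/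
/-!
Cauchy–Schwarz for the form of `P`, applied to `P⁻¹ c` and `s`, gives
`(cᵀ s)² ≤ (cᵀ P⁻¹ c) (sᵀ P s)`; equality holds at `s = P⁻¹ c / √(cᵀ P⁻¹ c)`, which lies in the
ellipsoid. Hence `√(cᵀ P⁻¹ c)` is the maximum of `cᵀ s` over the ellipsoid.
-/

namespace Matrix

variable {ι : Type*} [Fintype ι] {P : Matrix ι ι ℝ}

theorem PosSemidef.dotProduct_mulVec_sq_le (hP : P.PosSemidef) (x y : ι → ℝ) :
    (x ⬝ᵥ P *ᵥ y) ^ 2 ≤ (x ⬝ᵥ P *ᵥ x) * (y ⬝ᵥ P *ᵥ y) := by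
  classical
  have hnonneg (v : ι → ℝ) : 0 ≤ P.toBilin' v v := by
    simpa only [toBilin'_apply', star_trivial] using hP.dotProduct_mulVec_nonneg v
  have hsymm : LinearMap.IsSymm P.toBilin' := LinearMap.BilinForm.isSymm_iff.mp <|
    isSymm_toBilin'_iff_isSymm.mpr (isHermitian_iff_isSymm.mp hP.isHermitian)
  simpa only [toBilin'_apply'] using P.toBilin'.apply_sq_le_of_symm hnonneg hsymm x y

variable [DecidableEq ι]

theorem PosDef.mulVec_inv_mulVec (hP : P.PosDef) (c : ι → ℝ) : P *ᵥ P⁻¹ *ᵥ c = c := by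
  rw [mulVec_mulVec, mul_nonsing_inv _ (isUnit_iff_isUnit_det _ |>.mp hP.isUnit), one_mulVec]

theorem PosDef.dotProduct_sq_le (hP : P.PosDef) (c s : ι → ℝ) :
    (c ⬝ᵥ s) ^ 2 ≤ (c ⬝ᵥ P⁻¹ *ᵥ c) * (s ⬝ᵥ P *ᵥ s) := by
  have hsymm : Pᵀ = P := isHermitian_iff_isSymm.mp hP.isHermitian
  have key := hP.posSemidef.dotProduct_mulVec_sq_le (P⁻¹ *ᵥ c) s
  rwa [hP.mulVec_inv_mulVec, dotProduct_comm (P⁻¹ *ᵥ c) c, dotProduct_mulVec, ← mulVec_transpose,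
    hsymm, hP.mulVec_inv_mulVec] at key

theorem PosDef.isGreatest_dotProduct_image (hP : P.PosDef) (c : ι → ℝ) :
    IsGreatest ((c ⬝ᵥ ·) '' {s | s ⬝ᵥ P *ᵥ s ≤ 1}) √(c ⬝ᵥ P⁻¹ *ᵥ c) := by
  set q := c ⬝ᵥ P⁻¹ *ᵥ c
  have hq : 0 ≤ q := by simpa only [star_trivial] using hP.inv.posSemidef.dotProduct_mulVec_nonneg c
  -- for `c = 0` this witness is `0`, since `(√0)⁻¹ = 0`
  refine ⟨⟨(√q)⁻¹ • P⁻¹ *ᵥ c, ?_, ?_⟩, ?_⟩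
  · have hquad : ((√q)⁻¹ • P⁻¹ *ᵥ c) ⬝ᵥ P *ᵥ ((√q)⁻¹ • P⁻¹ *ᵥ c) = q⁻¹ * q := by
      rw [mulVec_smul, hP.mulVec_inv_mulVec, smul_dotProduct, dotProduct_smul, dotProduct_comm,
        smul_eq_mul, smul_eq_mul, ← mul_assoc, ← mul_inv, Real.mul_self_sqrt hq]
    exact hquad.le.trans (inv_mul_le_one_of_le₀ le_rfl hq)
  · change c ⬝ᵥ (√q)⁻¹ • P⁻¹ *ᵥ c = √q
    rw [dotProduct_smul, smul_eq_mul, inv_mul_eq_div]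
    exact Real.div_sqrt
  · rintro _ ⟨s, hs, rfl⟩
    refine (le_abs_self _).trans (Real.abs_le_sqrt ?_)
    exact (hP.dotProduct_sq_le c s).trans (mul_le_of_le_one_right hq hs)

end Matrix

theorem stmt_3_general {n : ℕ} (P : Matrix (Fin n) (Fin n) ℝ) (hP : P.PosDef)
    (c : Fin n → ℝ) :
    (∀ s : Fin n → ℝ, s ⬝ᵥ P.mulVec s ≤ 1 → c ⬝ᵥ s ≤ 1) ↔ c ⬝ᵥ P⁻¹.mulVec c ≤ 1 := by
  rw [← Real.sqrt_le_one, isLUB_le_iff (hP.isGreatest_dotProduct_image c).isLUB]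
  simp [upperBounds]

theorem stmt_3 {n : ℕ} (P : Matrix (Fin n) (Fin n) ℝ) (hP : P.PosDef)
    (c : Fin n → ℝ) (hc : c ≠ 0) :
    (∀ s : Fin n → ℝ, s ⬝ᵥ P.mulVec s ≤ 1 → c ⬝ᵥ s ≤ 1) ↔ c ⬝ᵥ P⁻¹.mulVec c ≤ 1 :=
  stmt_3_general P hP c
end

section
/- Let P be a positive definite symmetric n×n real matrix and c ∈ ℝⁿ a nonzero vector. Then (cᵀ s ≥ −1 for every s ∈ ℝⁿ with sᵀ P s ≤ 1) if and only if cᵀ P⁻¹ c ≤ 1. -/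
open Matrix

theorem stmt_4 {n : ℕ} (P : Matrix (Fin n) (Fin n) ℝ) (hP : P.PosDef)
    (c : Fin n → ℝ) (hc : c ≠ 0) :
    (∀ s : Fin n → ℝ, s ⬝ᵥ P.mulVec s ≤ 1 → -1 ≤ c ⬝ᵥ s) ↔ c ⬝ᵥ P⁻¹.mulVec c ≤ 1 := by
  have hsym : Pᵀ = P := hP.1
  have hBsym : ∀ a b : Fin n → ℝ, a ⬝ᵥ P *ᵥ b = b ⬝ᵥ P *ᵥ a := by
    intro a b
    rw [Matrix.dotProduct_mulVec, ← Matrix.mulVec_transpose, hsym, dotProduct_comm]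
  have hpsd : ∀ x : Fin n → ℝ, 0 ≤ x ⬝ᵥ P *ᵥ x := by
    intro x
    simpa using hP.posSemidef.re_dotProduct_nonneg x
  set u : Fin n → ℝ := P⁻¹ *ᵥ c with hu
  have hPu : P *ᵥ u = c := by
    rw [hu, Matrix.mulVec_mulVec, Matrix.mul_nonsing_inv _ (isUnit_iff_ne_zero.mpr hP.det_pos.ne'), Matrix.one_mulVec]
  set q : ℝ := c ⬝ᵥ P⁻¹ *ᵥ c with hqdef
  have hq0 : 0 < q := by
    simpa using hP.inv.re_dotProduct_pos hc
  have hquu : u ⬝ᵥ P *ᵥ u = q := by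
    rw [hPu, dotProduct_comm]
  have hcu : c ⬝ᵥ u = q := rfl
  have hCS : ∀ s : Fin n → ℝ, (c ⬝ᵥ s) ^ 2 ≤ q * (s ⬝ᵥ P *ᵥ s) := by
    intro s
    have hexp : (q • s + (-(c ⬝ᵥ s)) • u) ⬝ᵥ P *ᵥ (q • s + (-(c ⬝ᵥ s)) • u)
        = q ^ 2 * (s ⬝ᵥ P *ᵥ s) - 2 * q * (c ⬝ᵥ s) ^ 2 + (c ⬝ᵥ s) ^ 2 * q := by
      have h1 : u ⬝ᵥ P *ᵥ s = c ⬝ᵥ s := by rw [hBsym, ← hPu, dotProduct_comm]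
      simp only [Matrix.mulVec_add, Matrix.mulVec_smul, dotProduct_add, add_dotProduct,
        smul_dotProduct, dotProduct_smul, smul_eq_mul]
      rw [hBsym s u, h1, hquu]
      ring
    have h0 := hpsd (q • s + (-(c ⬝ᵥ s)) • u)
    rw [hexp] at h0
    nlinarith [hq0, h0]
  constructor
  · intro h
    have hs1 : ((-(1 / Real.sqrt q)) • u) ⬝ᵥ P *ᵥ ((-(1 / Real.sqrt q)) • u) = 1 := by
      rw [Matrix.mulVec_smul, dotProduct_smul, smul_dotProduct, hquu]
      have : Real.sqrt q ^ 2 = q := Real.sq_sqrt hq0.le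
      have hsq : Real.sqrt q ≠ 0 := by positivity
      have e : -(1 / Real.sqrt q) * (-(1 / Real.sqrt q) * q) = q / Real.sqrt q ^ 2 := by ring
      rw [smul_eq_mul, smul_eq_mul, e, this, div_self hq0.ne']
    have h1 := h _ hs1.le
    have hcs0 : c ⬝ᵥ ((-(1 / Real.sqrt q)) • u) = -(Real.sqrt q) := by
      rw [dotProduct_smul, hcu, smul_eq_mul]
      have hsq : Real.sqrt q ≠ 0 := by positivity
      have : Real.sqrt q ^ 2 = q := Real.sq_sqrt hq0.le
      field_simp
      rw [this]
    rw [hcs0] at h1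
    have hsq1 : Real.sqrt q ≤ 1 := by linarith
    nlinarith [Real.sq_sqrt hq0.le, Real.sqrt_nonneg q]
  · intro hq1 s hs
    have := hCS s
    have hsn := hpsd s
    nlinarith [this]
end

section
/- Let P be a positive definite symmetric n×n real matrix and c ∈ ℝⁿ a nonzero vector. Then the real number −√(cᵀ P⁻¹ c) is the least element of the set { cᵀ s : s ∈ ℝⁿ, sᵀ P s ≤ 1 }; that is, cᵀ s ≥ −√(cᵀ P⁻¹ c) for every s with sᵀ P s ≤ 1, and this bound is attained by some s with sᵀ P s ≤ 1. -/
open Matrix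

private lemma symm_dot {n : ℕ} {P : Matrix (Fin n) (Fin n) ℝ} (hP : P.IsHermitian)
    (x y : Fin n → ℝ) : x ⬝ᵥ P.mulVec y = y ⬝ᵥ P.mulVec x := by
  have hPt : Pᵀ = P := by simpa using hP.eq
  calc x ⬝ᵥ P.mulVec y = x ᵥ* P ⬝ᵥ y := Matrix.dotProduct_mulVec x P y
  _ = (Pᵀ *ᵥ x) ⬝ᵥ y := by rw [Matrix.mulVec_transpose]
  _ = (P *ᵥ x) ⬝ᵥ y := by rw [hPt]
  _ = y ⬝ᵥ P *ᵥ x := dotProduct_comm _ _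

private lemma cauchy_schwarz {n : ℕ} {P : Matrix (Fin n) (Fin n) ℝ} (hP : P.PosDef)
    (x y : Fin n → ℝ) :
    (x ⬝ᵥ P.mulVec y) ^ 2 ≤ (x ⬝ᵥ P.mulVec x) * (y ⬝ᵥ P.mulVec y) := by
  by_cases hx : x = 0
  · simp [hx]
  · set a := x ⬝ᵥ P.mulVec x with ha
    set b := x ⬝ᵥ P.mulVec y with hb
    set d := y ⬝ᵥ P.mulVec y with hd
    have hapos : 0 < a := hP.re_dotProduct_pos hx
    have key : ∀ t : ℝ, 0 ≤ a * t ^ 2 + 2 * b * t + d := by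
      intro t
      have expand : (t • x + y) ⬝ᵥ P.mulVec (t • x + y) = a * t ^ 2 + 2 * b * t + d := by
        simp only [Matrix.mulVec_add, Matrix.mulVec_smul, add_dotProduct,
          dotProduct_add, smul_dotProduct, dotProduct_smul, smul_eq_mul,
          symm_dot hP.isHermitian y x, ← ha, ← hb, ← hd]
        ring
      rw [← expand]
      exact hP.posSemidef.re_dotProduct_nonneg _
    have := key (-b / a)
    have h2 : a * (-b / a) ^ 2 + 2 * b * (-b / a) + d = d - b ^ 2 / a := by
      field_simp
      ring
    rw [h2] at this
    have : b ^ 2 / a ≤ d := by linarith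
    calc b ^ 2 = (b ^ 2 / a) * a := by field_simp
    _ ≤ d * a := mul_le_mul_of_nonneg_right this hapos.le
    _ = a * d := mul_comm _ _

theorem stmt_5 {n : ℕ} (P : Matrix (Fin n) (Fin n) ℝ) (hP : P.PosDef)
    (c : Fin n → ℝ) (hc : c ≠ 0) :
    IsLeast {x : ℝ | ∃ s : Fin n → ℝ, s ⬝ᵥ P.mulVec s ≤ 1 ∧ x = c ⬝ᵥ s}
      (-Real.sqrt (c ⬝ᵥ P⁻¹.mulVec c)) := by
  have hQ : P⁻¹.PosDef := hP.inv
  have hα : 0 < c ⬝ᵥ P⁻¹.mulVec c := hQ.re_dotProduct_pos hc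
  set α : ℝ := c ⬝ᵥ P⁻¹.mulVec c with hαdef
  have hsqrt : 0 < Real.sqrt α := Real.sqrt_pos.mpr hα
  have hss : Real.sqrt α * Real.sqrt α = α := Real.mul_self_sqrt hα.le
  have hPQ : P * P⁻¹ = 1 := Matrix.mul_nonsing_inv P (isUnit_iff_ne_zero.mpr hP.det_pos.ne')
  have hQc : P.mulVec (P⁻¹.mulVec c) = c := by
    rw [Matrix.mulVec_mulVec, hPQ, Matrix.one_mulVec]
  have hQca : (P⁻¹.mulVec c) ⬝ᵥ c = α := dotProduct_comm _ _
  constructor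
  · refine ⟨(-(Real.sqrt α)⁻¹) • P⁻¹.mulVec c, ?_, ?_⟩
    · simp only [Matrix.mulVec_smul, hQc, smul_dotProduct, dotProduct_smul,
        smul_eq_mul, hQca]
      have : -(Real.sqrt α)⁻¹ * (-(Real.sqrt α)⁻¹ * α) = 1 := by
        rw [show -(Real.sqrt α)⁻¹ * (-(Real.sqrt α)⁻¹ * α) = α / (Real.sqrt α * Real.sqrt α)
          from by ring, hss, div_self hα.ne']
      rw [this]
    · simp only [dotProduct_smul, smul_eq_mul, ← hαdef]
      rw [← hss]
      field_simp
      rw [Real.sqrt_sq hsqrt.le]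
  · rintro x ⟨s, hs, rfl⟩
    have hcs : (c ⬝ᵥ s) ^ 2 ≤ α * (s ⬝ᵥ P.mulVec s) := by
      have h1 := cauchy_schwarz hP (P⁻¹.mulVec c) s
      have h2 : (P⁻¹.mulVec c) ⬝ᵥ P.mulVec s = c ⬝ᵥ s := by
        rw [symm_dot hP.isHermitian, Matrix.mulVec_mulVec, hPQ, Matrix.one_mulVec,
          dotProduct_comm]
      have h3 : (P⁻¹.mulVec c) ⬝ᵥ P.mulVec (P⁻¹.mulVec c) = α := by
        rw [hQc, hQca]
      rw [h2, h3] at h1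
      exact h1
    have hcs2 : (c ⬝ᵥ s) ^ 2 ≤ α := by
      calc (c ⬝ᵥ s) ^ 2 ≤ α * (s ⬝ᵥ P.mulVec s) := hcs
      _ ≤ α * 1 := mul_le_mul_of_nonneg_left hs hα.le
      _ = α := mul_one _
    have habs : |c ⬝ᵥ s| ≤ Real.sqrt α := by
      rw [← Real.sqrt_sq_eq_abs]
      exact Real.sqrt_le_sqrt hcs2
    linarith [neg_abs_le (c ⬝ᵥ s)]
end

section
/- Let P be a positive definite symmetric n×n real matrix, D an h×n real matrix, and v, v̄, v̲ ∈ ℝʰ vectors such that for every index i one has v̲ᵢ + vᵢ < 0 < v̄ᵢ + vᵢ. Suppose that for every index i, (Dᵢ P⁻¹ Dᵢᵀ)/(v̄ᵢ + vᵢ)² ≤ 1 and (Dᵢ P⁻¹ Dᵢᵀ)/(v̲ᵢ + vᵢ)² ≤ 1, where Dᵢ denotes the i-th row of D. Then the safety envelope is contained in the safety set: every s ∈ ℝⁿ with sᵀ P s ≤ 1 satisfies v̲ᵢ ≤ (D·s)ᵢ − vᵢ ≤ v̄ᵢ for every index i. -/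
open Matrix

lemma cs_aux {n : ℕ} {Q : Matrix (Fin n) (Fin n) ℝ} (hQ : Q.PosSemidef)
    (u w : Fin n → ℝ) :
    (u ⬝ᵥ Q.mulVec w) ^ 2 ≤ (u ⬝ᵥ Q.mulVec u) * (w ⬝ᵥ Q.mulVec w) := by
  have hsym : ∀ x y : Fin n → ℝ, x ⬝ᵥ Q.mulVec y = y ⬝ᵥ Q.mulVec x := by
    intro x y
    have hQt : Qᵀ = Q := by
      have := hQ.isHermitian
      simpa [Matrix.IsHermitian, Matrix.conjTranspose_eq_transpose_of_trivial] using this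
    rw [Matrix.dotProduct_mulVec, ← Matrix.mulVec_transpose, hQt,
      dotProduct_comm]
  have key : ∀ t : ℝ, 0 ≤ (w ⬝ᵥ Q.mulVec w) * (t * t) +
      (2 * (u ⬝ᵥ Q.mulVec w)) * t + (u ⬝ᵥ Q.mulVec u) := by
    intro t
    have h0 := hQ.re_dotProduct_nonneg (u + t • w)
    simp only [RCLike.star_def, star_trivial, RCLike.re_to_real] at h0
    have hexp : (u + t • w) ⬝ᵥ Q.mulVec (u + t • w) =
        (w ⬝ᵥ Q.mulVec w) * (t * t) + (2 * (u ⬝ᵥ Q.mulVec w)) * t +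
          (u ⬝ᵥ Q.mulVec u) := by
      simp only [Matrix.mulVec_add, Matrix.mulVec_smul, add_dotProduct,
        dotProduct_add, smul_dotProduct, dotProduct_smul,
        smul_eq_mul, hsym w u]
      ring
    rw [hexp] at h0
    exact h0
  have hd := discrim_le_zero key
  rw [discrim] at hd
  nlinarith [hd]

theorem stmt_6 {n h : ℕ} (P : Matrix (Fin n) (Fin n) ℝ) (hP : P.PosDef)
    (D : Matrix (Fin h) (Fin n) ℝ) (v vbar vlow : Fin h → ℝ)
    (hsign : ∀ i, vlow i + v i < 0 ∧ 0 < vbar i + v i)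
    (hcond : ∀ i, (D i ⬝ᵥ P⁻¹.mulVec (D i)) / (vbar i + v i) ^ 2 ≤ 1 ∧
                  (D i ⬝ᵥ P⁻¹.mulVec (D i)) / (vlow i + v i) ^ 2 ≤ 1) :
    ∀ s : Fin n → ℝ, s ⬝ᵥ P.mulVec s ≤ 1 →
      ∀ i, vlow i ≤ D.mulVec s i - v i ∧ D.mulVec s i - v i ≤ vbar i := by
  intro s hs i
  set a : Fin n → ℝ := D i with ha
  set y : Fin n → ℝ := P⁻¹.mulVec a with hy
  have hPinv : P * P⁻¹ = 1 :=
    Matrix.mul_nonsing_inv P (isUnit_iff_ne_zero.mpr hP.det_pos.ne')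
  have hPy : P.mulVec y = a := by
    rw [hy, Matrix.mulVec_mulVec, hPinv, Matrix.one_mulVec]
  have hsymP : ∀ x z : Fin n → ℝ, x ⬝ᵥ P.mulVec z = z ⬝ᵥ P.mulVec x := by
    intro x z
    have hQt : Pᵀ = P := by
      have := hP.posSemidef.isHermitian
      simpa [Matrix.IsHermitian, Matrix.conjTranspose_eq_transpose_of_trivial] using this
    rw [Matrix.dotProduct_mulVec, ← Matrix.mulVec_transpose, hQt,
      dotProduct_comm]
  have hDs : D.mulVec s i = a ⬝ᵥ s := rfl
  have has : a ⬝ᵥ s = y ⬝ᵥ P.mulVec s := by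
    rw [hsymP y s, hPy, dotProduct_comm]
  have hyy : y ⬝ᵥ P.mulVec y = a ⬝ᵥ P⁻¹.mulVec a := by
    rw [hPy, dotProduct_comm]
  have hcs := cs_aux hP.posSemidef y s
  rw [hyy] at hcs
  have hss : (0:ℝ) ≤ s ⬝ᵥ P.mulVec s := by
    have := hP.posSemidef.re_dotProduct_nonneg s
    simpa using this
  have haa : (0:ℝ) ≤ a ⬝ᵥ P⁻¹.mulVec a := by
    have := (hP.posSemidef.inv).re_dotProduct_nonneg a
    simpa using this
  obtain ⟨hs1, hs2⟩ := hsign i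
  obtain ⟨hc1, hc2⟩ := hcond i
  have hb1 : a ⬝ᵥ P⁻¹.mulVec a ≤ (vbar i + v i) ^ 2 := by
    rw [div_le_one (pow_pos hs2 2)] at hc1; exact hc1
  have hb2 : a ⬝ᵥ P⁻¹.mulVec a ≤ (vlow i + v i) ^ 2 := by
    have hpos : (0:ℝ) < (vlow i + v i) ^ 2 := by nlinarith
    rw [div_le_one hpos] at hc2; exact hc2
  have hx1 : (y ⬝ᵥ P.mulVec s) ^ 2 ≤ (vbar i + v i) ^ 2 := by
    nlinarith
  have hx2 : (y ⬝ᵥ P.mulVec s) ^ 2 ≤ (vlow i + v i) ^ 2 := by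
    nlinarith
  rw [hDs, has]
  constructor <;> nlinarith
end

section
/- Let P and Ā be n×n real matrices with P symmetric positive definite, let 0 < α < 1 be a real number, and suppose the matrix α•P − Āᵀ·P·Ā is positive semidefinite. Let s : ℕ → ℝⁿ be any sequence of states, and for each k define the sub-reward r(k) = s(k)ᵀ (Āᵀ·P·Ā) s(k) − s(k+1)ᵀ P s(k+1). If r(k) ≥ α − 1 for every k and s(0)ᵀ P s(0) ≤ 1, then s(k)ᵀ P s(k) ≤ 1 for every k ∈ ℕ; i.e., the trajectory remains in the safety envelope for all time. -/
open Matrix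

theorem stmt_9 {n : ℕ} (P Abar : Matrix (Fin n) (Fin n) ℝ) (hP : P.PosDef)
    (α : ℝ) (hα0 : 0 < α) (hα1 : α < 1)
    (hsemi : (α • P - Abarᵀ * P * Abar).PosSemidef)
    (s : ℕ → Fin n → ℝ)
    (hr : ∀ k, α - 1 ≤
      s k ⬝ᵥ (Abarᵀ * P * Abar).mulVec (s k) - s (k + 1) ⬝ᵥ P.mulVec (s (k + 1)))
    (h0 : s 0 ⬝ᵥ P.mulVec (s 0) ≤ 1) :
    ∀ k, s k ⬝ᵥ P.mulVec (s k) ≤ 1 := by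
  intro k
  induction k with
  | zero => exact h0
  | succ k ih =>
    have hsd := hsemi.dotProduct_mulVec_nonneg (s k)
    have hexp : (star (s k)) ⬝ᵥ (α • P - Abarᵀ * P * Abar).mulVec (s k)
        = α * (s k ⬝ᵥ P.mulVec (s k)) - s k ⬝ᵥ (Abarᵀ * P * Abar).mulVec (s k) := by
      simp [sub_mulVec, smul_mulVec, dotProduct_sub, dotProduct_smul, smul_eq_mul]
    rw [hexp] at hsd
    have h1 : s k ⬝ᵥ (Abarᵀ * P * Abar).mulVec (s k) ≤ α * (s k ⬝ᵥ P.mulVec (s k)) := by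
      linarith
    have h2 := hr k
    nlinarith
end

section
/- Let P and Ā be n×n real matrices with P symmetric positive definite, let 0 < α < 1, and suppose α•P − Āᵀ·P·Ā is positive definite. Let s : ℕ → ℝⁿ be any sequence with s(k) ≠ 0 for all k, and define r(k) = s(k)ᵀ (Āᵀ·P·Ā) s(k) − s(k+1)ᵀ P s(k+1). If r(k) > (α − 1) · (s(k)ᵀ P s(k)) for every k, then the Lyapunov function V(k) = s(k)ᵀ P s(k) is strictly decreasing: s(k+1)ᵀ P s(k+1) < s(k)ᵀ P s(k) for every k ∈ ℕ. -/
open Matrix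

theorem stmt_11 {n : ℕ} (P Abar : Matrix (Fin n) (Fin n) ℝ) (hP : P.PosDef)
    (α : ℝ) (hα0 : 0 < α) (hα1 : α < 1)
    (hpos : (α • P - Abarᵀ * P * Abar).PosDef)
    (s : ℕ → Fin n → ℝ) (hs : ∀ k, s k ≠ 0)
    (hr : ∀ k, (α - 1) * (s k ⬝ᵥ P.mulVec (s k)) <
      s k ⬝ᵥ (Abarᵀ * P * Abar).mulVec (s k) - s (k + 1) ⬝ᵥ P.mulVec (s (k + 1))) :
    ∀ k, s (k + 1) ⬝ᵥ P.mulVec (s (k + 1)) < s k ⬝ᵥ P.mulVec (s k) := by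
  intro k
  have h1 := hpos.dotProduct_mulVec_pos (hs k)
  have h2 := hr k
  have hexp : s k ⬝ᵥ (α • P - Abarᵀ * P * Abar).mulVec (s k) =
      α * (s k ⬝ᵥ P.mulVec (s k)) - s k ⬝ᵥ (Abarᵀ * P * Abar).mulVec (s k) := by
    rw [sub_mulVec, dotProduct_sub, smul_mulVec, dotProduct_smul, smul_eq_mul]
  simp only [star_trivial] at h1
  rw [hexp] at h1
  linarith
end
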